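/- Let r₁,…,r₄ ∈ ℝ³ be the unit vectors to the vertices of a regular tetrahedron, and let g_{m,ℓ} = (r_m − r_ℓ)/‖r_m − r_ℓ‖ for m ≠ ℓ. Then for every unit vector v ∈ ℝ³ there exist m ≠ ℓ such that g_{m,ℓ}·v ≥ 1/√2. -/

import Mathlib

/-!
Write `a i = ⟪r i, v⟫`. Unit vectors with constant pairwise inner product `c` and zero sum that
span the space form a tight frame, so `∑ a i ^ 2 = (1 - c) ‖v‖ ^ 2 = 4 / 3`, while `∑ a i = 0`.
For such numbers, `∑ (a i - min a) (max a - a i) ≥ 0` gives `4 ∑ a i ^ 2 ≤ 4 (max a - min a) ^ 2`,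
so the edge between the vertices realising `max a` and `min a`, of length `√(8 / 3)`, has
projection at least `√(4 / 3) / √(8 / 3) = 1 / √2` on `v`.
-/

open Finset RealInnerProductSpace

theorem exists_four_mul_sum_sq_le_card_mul_sq_sub {ι : Type*} [Fintype ι] [Nonempty ι]
    {a : ι → ℝ} (ha : ∑ i, a i = 0) :
    ∃ i j, a j ≤ a i ∧ 4 * ∑ k, a k ^ 2 ≤ Fintype.card ι * (a i - a j) ^ 2 := by
  obtain ⟨i, hi⟩ := Finite.exists_max a
  obtain ⟨j, hj⟩ := Finite.exists_min a
  have hnonneg : 0 ≤ ∑ k, (a k - a j) * (a i - a k) :=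
    sum_nonneg fun k _ => mul_nonneg (sub_nonneg.mpr (hj k)) (sub_nonneg.mpr (hi k))
  have hterm : ∀ k, (a k - a j) * (a i - a k) = (a i + a j) * a k - a k ^ 2 - a j * a i :=
    fun k => by ring
  simp only [hterm, sum_sub_distrib, ← mul_sum, sum_const, card_univ, nsmul_eq_mul, ha] at hnonneg
  exact ⟨i, j, hj i, by nlinarith [sq_nonneg (a i + a j)]⟩

section EquiangularFamily

variable {E : Type*} [NormedAddCommGroup E] [InnerProductSpace ℝ E]
  {ι : Type*} [Fintype ι] {r : ι → E} {c : ℝ}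

theorem inner_sum_smul_of_inner_eq_const (hnorm : ∀ i, ‖r i‖ = 1)
    (hinner : ∀ i j, i ≠ j → ⟪r i, r j⟫ = c) (f : ι → ℝ) (k : ι) :
    ⟪r k, ∑ j, f j • r j⟫ = (1 - c) * f k + c * ∑ j, f j := by
  classical
  have hterm : ∀ j, f j * ⟪r k, r j⟫ = (1 - c) * (if k = j then f j else 0) + c * f j := by
    intro j
    by_cases hkj : k = j
    · subst hkj
      rw [if_pos rfl, real_inner_self_eq_norm_sq, hnorm]
      ring
    · simp [hinner k j hkj, hkj, mul_comm]
  simp only [inner_sum, real_inner_smul_right, hterm, sum_add_distrib, ← mul_sum, sum_ite_eq,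
    mem_univ, if_true]

theorem linearIndependent_of_inner_eq_const (hnorm : ∀ i, ‖r i‖ = 1)
    (hinner : ∀ i j, i ≠ j → ⟪r i, r j⟫ = c) (hc : c ≠ 1)
    (hcard : 1 - c + Fintype.card ι * c ≠ 0) : LinearIndependent ℝ r := by
  rw [Fintype.linearIndependent_iff]
  intro f hf
  have hcoord : ∀ k, (1 - c) * f k + c * ∑ j, f j = 0 := fun k => by
    rw [← inner_sum_smul_of_inner_eq_const hnorm hinner, hf, inner_zero_right]
  have hsum : ∑ j, f j = 0 := by
    have htotal : (1 - c + Fintype.card ι * c) * ∑ j, f j = 0 := by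
      have := sum_eq_zero fun k (_ : k ∈ univ) => hcoord k
      rw [sum_add_distrib, ← mul_sum, sum_const, card_univ, nsmul_eq_mul] at this
      linarith
    exact (mul_eq_zero.mp htotal).resolve_left hcard
  intro k
  have := hcoord k
  rw [hsum, mul_zero, add_zero] at this
  exact (mul_eq_zero.mp this).resolve_left (sub_ne_zero.mpr hc.symm)

theorem ext_inner_of_span_range_eq_top (hr : Submodule.span ℝ (Set.range r) = ⊤) {x y : E}
    (h : ∀ i, ⟪r i, x⟫ = ⟪r i, y⟫) : x = y := by
  refine ext_inner_left ℝ fun v => ?_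
  have hv : v ∈ Submodule.span ℝ (Set.range r) := hr ▸ Submodule.mem_top
  obtain ⟨f, rfl⟩ := (Submodule.mem_span_range_iff_exists_fun ℝ).mp hv
  simp [sum_inner, real_inner_smul_left, h]

/-- The family is a tight frame: `x = (1 - c)⁻¹ ∑ ⟪r i, x⟫ r i`. -/
theorem sum_inner_sq_eq_of_inner_eq_const (hnorm : ∀ i, ‖r i‖ = 1)
    (hinner : ∀ i j, i ≠ j → ⟪r i, r j⟫ = c) (hc : c ≠ 1) (hsum : ∑ i, r i = 0)
    (hr : Submodule.span ℝ (Set.range r) = ⊤) (x : E) :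
    ∑ i, ⟪r i, x⟫ ^ 2 = (1 - c) * ‖x‖ ^ 2 := by
  have hc' : 1 - c ≠ 0 := sub_ne_zero.mpr hc.symm
  have hcoef : ∑ i, ⟪r i, x⟫ = 0 := by rw [← sum_inner, hsum, inner_zero_left]
  have hx : x = (1 - c)⁻¹ • ∑ i, ⟪r i, x⟫ • r i := by
    refine ext_inner_of_span_range_eq_top hr fun k => ?_
    rw [real_inner_smul_right, inner_sum_smul_of_inner_eq_const hnorm hinner, hcoef]
    field_simp
    ring
  calc ∑ i, ⟪r i, x⟫ ^ 2 = (1 - c) * ⟪x, (1 - c)⁻¹ • ∑ i, ⟪r i, x⟫ • r i⟫ := by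
        simp only [real_inner_smul_right, inner_sum, real_inner_comm x, sq]
        field_simp
    _ = (1 - c) * ‖x‖ ^ 2 := by rw [← hx, real_inner_self_eq_norm_sq]

theorem exists_sqrt_two_div_card_le_inner_normalized_sub [Nonempty ι]
    (hnorm : ∀ i, ‖r i‖ = 1) (hinner : ∀ i j, i ≠ j → ⟪r i, r j⟫ = c) (hc : c < 1)
    (hsum : ∑ i, r i = 0) (hr : Submodule.span ℝ (Set.range r) = ⊤) {x : E} (hx : ‖x‖ = 1) :
    ∃ i j, i ≠ j ∧ √(2 / Fintype.card ι) ≤ ⟪‖r i - r j‖⁻¹ • (r i - r j), x⟫ := by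
  have hsq : ∑ i, ⟪r i, x⟫ ^ 2 = 1 - c := by
    rw [sum_inner_sq_eq_of_inner_eq_const hnorm hinner hc.ne hsum hr, hx, one_pow, mul_one]
  have hcoef : ∑ i, ⟪r i, x⟫ = 0 := by rw [← sum_inner, hsum, inner_zero_left]
  obtain ⟨i, j, hji, hgap⟩ := exists_four_mul_sum_sq_le_card_mul_sq_sub hcoef
  rw [hsq] at hgap
  have hne : i ≠ j := by
    rintro rfl
    rw [sub_self, zero_pow two_ne_zero, mul_zero] at hgap
    linarith
  have hedge : ‖r i - r j‖ = √(2 * (1 - c)) := by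
    rw [← Real.sqrt_sq (norm_nonneg _), norm_sub_sq_real, hnorm, hnorm, hinner i j hne]
    ring_nf
  refine ⟨i, j, hne, ?_⟩
  have hcard : (0 : ℝ) < Fintype.card ι := by exact_mod_cast Fintype.card_pos
  rw [real_inner_smul_left, inner_sub_left, hedge, inv_mul_eq_div,
    le_div_iff₀ (Real.sqrt_pos.mpr (by linarith)), ← Real.sqrt_mul (by positivity)]
  refine Real.sqrt_le_iff.mpr ⟨sub_nonneg.mpr hji, ?_⟩
  rw [div_mul_eq_mul_div, div_le_iff₀ hcard, mul_comm _ (Fintype.card ι : ℝ)]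
  linarith

end EquiangularFamily

theorem tetrahedron_edge_quantization (r : Fin 4 → EuclideanSpace ℝ (Fin 3))
    (hnorm : ∀ m, ‖r m‖ = 1)
    (hinner : ∀ m ℓ, m ≠ ℓ → (inner ℝ (r m) (r ℓ) : ℝ) = -1/3)
    (hsum : ∑ m, r m = 0)
    (g : Fin 4 → Fin 4 → EuclideanSpace ℝ (Fin 3))
    (hg : ∀ m ℓ, m ≠ ℓ → g m ℓ = ‖r m - r ℓ‖⁻¹ • (r m - r ℓ))
    (v : EuclideanSpace ℝ (Fin 3)) (hv : ‖v‖ = 1) :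
    ∃ m ℓ, m ≠ ℓ ∧ (1 / Real.sqrt 2) ≤ (inner ℝ (g m ℓ) v : ℝ) := by
  have hface : LinearIndependent ℝ fun i : Fin 3 => r i.castSucc :=
    linearIndependent_of_inner_eq_const (fun i => hnorm _)
      (fun i j hij => hinner _ _ ((Fin.castSucc_injective _).ne hij)) (by norm_num)
      (by norm_num)
  have hspan : Submodule.span ℝ (Set.range r) = ⊤ :=
    eq_top_iff.mpr <| (hface.span_eq_top_of_card_eq_finrank (by simp)).ge.trans
      (Submodule.span_mono (Set.range_comp_subset_range _ _))
  obtain ⟨m, ℓ, hmℓ, hbound⟩ := exists_sqrt_two_div_card_le_inner_normalized_sub hnorm hinner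
    (by norm_num) hsum hspan hv
  refine ⟨m, ℓ, hmℓ, ?_⟩
  rw [hg m ℓ hmℓ]
  convert hbound using 1
  rw [Fintype.card_fin, Nat.cast_ofNat, show (2 : ℝ) / 4 = 2⁻¹ by norm_num, Real.sqrt_inv, one_div]
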